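/- arXiv:1712.06977 — 3 statements merged into one kernel-verified Lean document; each statement's English description precedes it below -/
import Mathlib

section
/- Let n ≥ 1 and let K be a field of characteristic zero. For the cochain complex (C^•, d) of ordered partitions of {1,…,n}, the top cohomology H^n(C) = C^n / im(d : C^{n−1} → C^n) is a one-dimensional K-vector space. (Note C^{n+1} = 0, so every element of C^n is closed.) -/
/-!
The cochain complex of ordered partitions of `{1,…,n}` (the multidegree-`(1,…,1)` part of
the cobar construction of the polynomial coalgebra `K[t₁,…,tₙ]`).

An ordered partition of `{1,…,n}` (modeled on `Fin n`) into `k` blocks is a tuple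
`(B₁,…,B_k)` of pairwise disjoint nonempty subsets covering `{1,…,n}`; equivalently,
every block is nonempty and every element lies in exactly one block.
-/

/-- `B : Fin k → Finset (Fin n)` is an ordered partition: all blocks are nonempty and
every element of `{1,…,n}` lies in exactly one block (this encodes pairwise disjointness
together with the covering property). -/
def IsOrderedPartition (n k : ℕ) (B : Fin k → Finset (Fin n)) : Prop :=
  (∀ i, (B i).Nonempty) ∧ ∀ x : Fin n, ∃! i, x ∈ B i

/-- The set of ordered partitions of `{1,…,n}` into `k` blocks. -/
def OrderedPartition (n k : ℕ) : Type :=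
  {B : Fin k → Finset (Fin n) // IsOrderedPartition n k B}

/-- `C^k`, the free `K`-vector space on the set of ordered partitions of `{1,…,n}`
into `k` blocks. -/
abbrev OPC (K : Type*) [Field K] (n k : ℕ) : Type _ :=
  OrderedPartition n k →₀ K

/-- Replace the `i`-th block of the tuple `B` by the two consecutive blocks `A`, `A'`
(at positions `i` and `i+1`), shifting the later blocks by one. -/
def splitBlocks {n k : ℕ} (B : Fin k → Finset (Fin n)) (i : Fin k)
    (A A' : Finset (Fin n)) : Fin (k + 1) → Finset (Fin n) :=
  Function.update (i.succ.insertNth A' B) i.castSucc A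

open Classical in
/-- The differential `d : C^k → C^{k+1}`.  On a basis ordered partition `(B₁,…,B_k)` it is
`d(B₁,…,B_k) = Σ_{i} (−1)^{i} Σ_{(A,A')} (B₁,…,B_{i−1}, A, A', B_{i+1},…,B_k)`, the inner
sum running over all ordered pairs `(A, A')` of disjoint nonempty subsets with
`A ∪ A' = B_i` (such a pair is the same as a subset `A ⊆ B_i` with `A' = B_i \ A`;
the resulting tuple is an ordered partition exactly when both `A` and `A'` are nonempty,
which is what the `dite` below selects).  Here `i` runs over `Fin k` (zero-based), so the
sign `(−1)^i` matches the one-based sign `(−1)^{i−1}` of the informal statement. -/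
noncomputable def dOP (K : Type*) [Field K] (n k : ℕ) :
    OPC K n k →ₗ[K] OPC K n (k + 1) :=
  Finsupp.lsum K fun B => LinearMap.toSpanSingleton K _ <|
    ∑ i : Fin k, ∑ A ∈ (B.1 i).powerset,
      if h : IsOrderedPartition n (k + 1) (splitBlocks B.1 i A (B.1 i \ A)) then
        ((-1 : K) ^ (i : ℕ)) • Finsupp.single (⟨_, h⟩ : OrderedPartition n (k + 1)) (1 : K)
      else 0

/-!
The basis of `C^n` is indexed by permutations `σ`, an ordered partition into `n` blocks being a
sequence of singletons `({σ 0}, …, {σ (n-1)})`. The functional `e_σ ↦ sign σ` vanishes on the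
image of `d`: the splittings `A | A'` and `A' | A` of a block differ by an adjacent transposition
of blocks, so their contributions cancel. Conversely, applying `d` to the partition obtained from
`σ` by merging the blocks at positions `i` and `i + 1` gives `±(e_σ + e_{σ s_i})`; since adjacent
transpositions `s_i` generate the symmetric group, every `e_σ` is congruent to `sign σ • e_id`
modulo the image of `d`. Hence the sign functional induces `H^n(C) ≅ K`.
-/

open Finset

lemma IsOrderedPartition.comp_perm {n k : ℕ} {B : Fin k → Finset (Fin n)}
    (h : IsOrderedPartition n k B) (e : Equiv.Perm (Fin k)) : IsOrderedPartition n k (B ∘ e) := by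
  refine ⟨fun i => h.1 (e i), fun x => ?_⟩
  obtain ⟨i, hi, huniq⟩ := h.2 x
  exact ⟨e.symm i, by simpa using hi, fun j hj => e.eq_symm_apply.2 (huniq (e j) hj)⟩

lemma Fin.succ_succAbove_ne_castSucc {k : ℕ} {i j : Fin k} (hj : j ≠ i) :
    i.succ.succAbove j ≠ i.castSucc := by
  rw [← Fin.succAbove_succ_self]
  exact Fin.succAbove_right_injective.ne hj

namespace OrderedPartition

variable {n k : ℕ}

def reindex (P : OrderedPartition n k) (e : Equiv.Perm (Fin k)) : OrderedPartition n k :=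
  ⟨P.1 ∘ e, P.2.comp_perm e⟩

def ofPerm (σ : Equiv.Perm (Fin n)) : OrderedPartition n n :=
  ⟨fun i => {σ i}, fun i => singleton_nonempty _, fun x =>
    ⟨σ.symm x, by simp, fun j hj => σ.eq_symm_apply.2 (mem_singleton.1 hj).symm⟩⟩

lemma ofPerm_injective : Function.Injective (ofPerm (n := n)) := fun _ _ h =>
  Equiv.ext fun i => singleton_injective (congrFun (congrArg Subtype.val h) i)

/-- Sending each point to the index of its block is onto, hence a permutation of `Fin n`;
so every block is a singleton. -/
lemma ofPerm_surjective : Function.Surjective (ofPerm (n := n)) := by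
  intro P
  choose f hf using fun x => (P.2.2 x).exists
  have hf_surj : Function.Surjective f := fun i =>
    let ⟨x, hx⟩ := P.2.1 i
    ⟨x, (P.2.2 x).unique (hf x) hx⟩
  let τ := Equiv.ofBijective f ⟨Finite.injective_iff_surjective.2 hf_surj, hf_surj⟩
  refine ⟨τ.symm, Subtype.ext (funext fun i => Finset.ext fun x => ?_)⟩
  change x ∈ ({τ.symm i} : Finset _) ↔ x ∈ P.1 i
  rw [mem_singleton, Equiv.eq_symm_apply]
  change f x = i ↔ x ∈ P.1 i
  exact ⟨fun h => h ▸ hf x, (P.2.2 x).unique (hf x)⟩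

lemma reindex_ofPerm (σ e : Equiv.Perm (Fin n)) : (ofPerm σ).reindex e = ofPerm (σ * e) := rfl

noncomputable def equivPerm : Equiv.Perm (Fin n) ≃ OrderedPartition n n :=
  Equiv.ofBijective ofPerm ⟨ofPerm_injective, ofPerm_surjective⟩

noncomputable def sign (P : OrderedPartition n n) : ℤˣ :=
  Equiv.Perm.sign (equivPerm.symm P)

@[simp] lemma sign_ofPerm (σ : Equiv.Perm (Fin n)) : (ofPerm σ).sign = Equiv.Perm.sign σ := by
  rw [sign]
  exact congrArg _ (Equiv.ofBijective_symm_apply_apply _ _ σ)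

lemma sign_reindex (P : OrderedPartition n n) (e : Equiv.Perm (Fin n)) :
    (P.reindex e).sign = P.sign * Equiv.Perm.sign e := by
  obtain ⟨σ, rfl⟩ := ofPerm_surjective P
  rw [reindex_ofPerm, sign_ofPerm, sign_ofPerm, map_mul]

end OrderedPartition

section splitBlocks

variable {n k : ℕ} (B : Fin k → Finset (Fin n)) (i : Fin k) (A A' : Finset (Fin n))

@[simp] lemma splitBlocks_castSucc : splitBlocks B i A A' i.castSucc = A :=
  Function.update_self _ _ _

@[simp] lemma splitBlocks_succ : splitBlocks B i A A' i.succ = A' := by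
  rw [splitBlocks, Function.update_of_ne Fin.castSucc_lt_succ.ne', Fin.insertNth_apply_same]

lemma splitBlocks_succAbove {j : Fin k} (hj : j ≠ i) :
    splitBlocks B i A A' (i.succ.succAbove j) = B j := by
  rw [splitBlocks, Function.update_of_ne (Fin.succ_succAbove_ne_castSucc hj),
    Fin.insertNth_apply_succAbove]

lemma splitBlocks_eq {C : Fin (k + 1) → Finset (Fin n)} (h₁ : C i.castSucc = A)
    (h₂ : C i.succ = A') (h : ∀ j ≠ i, C (i.succ.succAbove j) = B j) :
    splitBlocks B i A A' = C := by
  funext p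
  rcases eq_or_ne p i.castSucc with rfl | hp₁
  · rw [splitBlocks_castSucc, h₁]
  rcases eq_or_ne p i.succ with rfl | hp₂
  · rw [splitBlocks_succ, h₂]
  obtain ⟨j, rfl⟩ := Fin.exists_succAbove_eq hp₂
  have hj : j ≠ i := by rintro rfl; exact hp₁ (Fin.succAbove_succ_self j)
  rw [splitBlocks_succAbove _ _ _ _ hj, h j hj]

lemma splitBlocks_comm :
    splitBlocks B i A' A = splitBlocks B i A A' ∘ Equiv.swap i.castSucc i.succ := by
  refine splitBlocks_eq _ _ _ _ (by simp) (by simp) fun j hj => ?_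
  rw [Function.comp_apply,
    Equiv.swap_apply_of_ne_of_ne (Fin.succ_succAbove_ne_castSucc hj) (Fin.succAbove_ne _ _),
    splitBlocks_succAbove _ _ _ _ hj]

variable {B i A A'}

lemma IsOrderedPartition.splitBlocks_comm
    (h : IsOrderedPartition n (k + 1) (splitBlocks B i A A')) :
    IsOrderedPartition n (k + 1) (splitBlocks B i A' A) := by
  rw [_root_.splitBlocks_comm]
  exact h.comp_perm _

lemma IsOrderedPartition.splitBlocks_nonempty
    (h : IsOrderedPartition n (k + 1) (splitBlocks B i A A')) : A.Nonempty ∧ A'.Nonempty :=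
  ⟨by simpa using h.1 i.castSucc, by simpa using h.1 i.succ⟩

end splitBlocks

section splitTerm

variable (K : Type*) [Field K] {n k : ℕ}

open Classical in
noncomputable def splitTerm (B : Fin k → Finset (Fin n)) (i : Fin k) (A : Finset (Fin n)) :
    OPC K n (k + 1) :=
  if h : IsOrderedPartition n (k + 1) (splitBlocks B i A (B i \ A)) then
    Finsupp.single ⟨_, h⟩ 1
  else 0

lemma dOP_single_one (B : OrderedPartition n k) :
    dOP K n k (Finsupp.single B 1) =
      ∑ i : Fin k, ∑ A ∈ (B.1 i).powerset, (-1 : K) ^ (i : ℕ) • splitTerm K B.1 i A := by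
  rw [dOP, Finsupp.lsum_single, LinearMap.toSpanSingleton_apply, one_smul]
  refine sum_congr rfl fun i _ => sum_congr rfl fun A _ => ?_
  unfold splitTerm
  split
  · exact dif_pos ‹_›
  · exact (dif_neg ‹_›).trans (smul_zero _).symm

variable {K} {B : Fin k → Finset (Fin n)} {i : Fin k} {A : Finset (Fin n)}

lemma splitTerm_of_eq {P : OrderedPartition n (k + 1)} (hP : splitBlocks B i A (B i \ A) = P.1) :
    splitTerm K B i A = Finsupp.single P 1 := by
  rw [splitTerm, dif_pos (hP ▸ P.2)]
  exact congrArg (Finsupp.single · 1) (Subtype.ext hP)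

lemma splitTerm_of_not_isOrderedPartition
    (h : ¬ IsOrderedPartition n (k + 1) (splitBlocks B i A (B i \ A))) : splitTerm K B i A = 0 :=
  dif_neg h

lemma splitTerm_empty : splitTerm K B i ∅ = 0 :=
  splitTerm_of_not_isOrderedPartition fun h => not_nonempty_empty h.splitBlocks_nonempty.1

lemma splitTerm_self : splitTerm K B i (B i) = 0 :=
  splitTerm_of_not_isOrderedPartition fun h => by
    simpa using h.splitBlocks_nonempty.2

end splitTerm

section signFunctional

variable (K : Type*) [Field K]

noncomputable def signFunctional (n : ℕ) : OPC K n n →ₗ[K] K :=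
  Finsupp.linearCombination K fun P => ((P.sign : ℤ) : K)

variable {K} {k : ℕ}

lemma signFunctional_single {n : ℕ} (P : OrderedPartition n n) (c : K) :
    signFunctional K n (Finsupp.single P c) = c * (P.sign : ℤ) := by
  rw [signFunctional, Finsupp.linearCombination_single, smul_eq_mul]

lemma signFunctional_splitTerm_add_compl {B : Fin k → Finset (Fin (k + 1))} {i : Fin k}
    {A : Finset (Fin (k + 1))} (hA : A ⊆ B i) :
    signFunctional K (k + 1) (splitTerm K B i A) +
      signFunctional K (k + 1) (splitTerm K B i (B i \ A)) = 0 := by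
  by_cases h : IsOrderedPartition (k + 1) (k + 1) (splitBlocks B i A (B i \ A))
  · set P : OrderedPartition (k + 1) (k + 1) := ⟨_, h⟩
    have hswap : splitBlocks B i (B i \ A) (B i \ (B i \ A)) =
        (P.reindex (Equiv.swap i.castSucc i.succ)).1 := by
      rw [Finset.sdiff_sdiff_eq_self hA, splitBlocks_comm]
      rfl
    rw [splitTerm_of_eq (P := P) rfl, splitTerm_of_eq hswap, signFunctional_single,
      signFunctional_single, OrderedPartition.sign_reindex,
      Equiv.Perm.sign_swap Fin.castSucc_lt_succ.ne]
    push_cast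
    ring
  · have h' : ¬ IsOrderedPartition (k + 1) (k + 1)
        (splitBlocks B i (B i \ A) (B i \ (B i \ A))) := by
      rw [Finset.sdiff_sdiff_eq_self hA]
      exact fun h' => h h'.splitBlocks_comm
    rw [splitTerm_of_not_isOrderedPartition h, splitTerm_of_not_isOrderedPartition h', map_zero,
      add_zero]

lemma sum_signFunctional_splitTerm (B : Fin k → Finset (Fin (k + 1))) (i : Fin k) :
    ∑ A ∈ (B i).powerset, signFunctional K (k + 1) (splitTerm K B i A) = 0 := by
  refine sum_involution (fun A _ => B i \ A)
    (fun A hA => signFunctional_splitTerm_add_compl (mem_powerset.1 hA))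
    (fun A _ hne hfix => hne ?_) (fun A _ => mem_powerset.2 sdiff_subset)
    (fun A hA => Finset.sdiff_sdiff_eq_self (mem_powerset.1 hA))
  have hdisj : Disjoint (B i \ A) A := sdiff_disjoint
  rw [hfix, disjoint_self, bot_eq_empty] at hdisj
  rw [hdisj, splitTerm_empty, map_zero]

lemma signFunctional_comp_dOP : (signFunctional K (k + 1)).comp (dOP K (k + 1) k) = 0 := by
  ext B
  simp only [LinearMap.comp_apply, Finsupp.lsingle_apply, LinearMap.zero_apply, dOP_single_one,
    map_sum, map_smul, ← smul_sum, sum_signFunctional_splitTerm, smul_zero, sum_const_zero]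

end signFunctional

lemma Fin.predAbove_eq_iff {m : ℕ} (i j : Fin m) (q : Fin (m + 1)) :
    i.predAbove q = j ↔ q = i.succ.succAbove j ∨ (j = i ∧ q = i.succ) := by
  rcases eq_or_ne q i.succ with rfl | hq
  · simp [(Fin.succAbove_ne _ _).symm, eq_comm]
  · have hq' := Fin.succ_succAbove_predAbove hq
    constructor
    · rintro rfl
      exact Or.inl hq'.symm
    · rintro (h | ⟨-, h⟩)
      · exact Fin.succAbove_right_injective (hq'.trans h)
      · exact absurd h hq

namespace OrderedPartition

variable {m : ℕ} (σ : Equiv.Perm (Fin (m + 1))) (i : Fin m)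

/-- `ofPerm σ` with its blocks `{σ i.castSucc}` and `{σ i.succ}` merged: the block of `σ q` is
`i.predAbove q`. -/
def mergeAdjacent : OrderedPartition (m + 1) m :=
  ⟨fun j => univ.filter fun x => i.predAbove (σ.symm x) = j,
    fun j => let ⟨q, hq⟩ := i.predAbove_surjective j; ⟨σ q, by simp [hq]⟩,
    fun x => ⟨i.predAbove (σ.symm x), by simp, fun _ hj => (mem_filter.1 hj).2.symm⟩⟩

lemma mergeAdjacent_self : (mergeAdjacent σ i).1 i = {σ i.castSucc, σ i.succ} := by
  ext x
  simp [mergeAdjacent, Fin.predAbove_eq_iff, Equiv.symm_apply_eq]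

lemma mergeAdjacent_of_ne {j : Fin m} (hj : j ≠ i) :
    (mergeAdjacent σ i).1 j = {σ (i.succ.succAbove j)} := by
  ext x
  simp [mergeAdjacent, Fin.predAbove_eq_iff, hj, Equiv.symm_apply_eq]

lemma splitBlocks_mergeAdjacent :
    splitBlocks (mergeAdjacent σ i).1 i {σ i.castSucc} {σ i.succ} = (ofPerm σ).1 :=
  splitBlocks_eq _ _ _ _ rfl rfl fun _ hj => (mergeAdjacent_of_ne σ i hj).symm

lemma dOP_mergeAdjacent (K : Type*) [Field K] :
    dOP K (m + 1) m (Finsupp.single (mergeAdjacent σ i) 1) =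
      (-1 : K) ^ (i : ℕ) • (Finsupp.single (ofPerm σ) 1 +
        Finsupp.single (ofPerm (σ * Equiv.swap i.castSucc i.succ)) 1) := by
  set M := mergeAdjacent σ i
  have hab : σ i.castSucc ≠ σ i.succ := σ.injective.ne Fin.castSucc_lt_succ.ne
  have hMa : M.1 i \ {σ i.castSucc} = {σ i.succ} := by
    rw [mergeAdjacent_self, sdiff_singleton_eq_erase, erase_insert (notMem_singleton.2 hab)]
  have hMb : M.1 i \ {σ i.succ} = {σ i.castSucc} := by
    rw [mergeAdjacent_self, insert_sdiff_cancel (by simpa using hab)]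
  have hsplit_a : splitTerm K M.1 i {σ i.castSucc} = Finsupp.single (ofPerm σ) 1 :=
    splitTerm_of_eq (by rw [hMa]; exact splitBlocks_mergeAdjacent σ i)
  have hsplit_b : splitTerm K M.1 i {σ i.succ} =
      Finsupp.single (ofPerm (σ * Equiv.swap i.castSucc i.succ)) 1 :=
    splitTerm_of_eq (by rw [hMb, splitBlocks_comm, splitBlocks_mergeAdjacent]; rfl)
  have hpowerset : ({σ i.succ} : Finset (Fin (m + 1))).powerset = {∅, {σ i.succ}} := by
    ext; simp [subset_singleton_iff]
  have hne : (∅ : Finset (Fin (m + 1))) ≠ {σ i.succ} := (singleton_nonempty _).ne_empty.symm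
  -- Singleton blocks have no proper splitting; the pair block has exactly two.
  rw [dOP_single_one, sum_eq_single i]
  · rw [mergeAdjacent_self, sum_powerset_insert (notMem_singleton.2 hab), hpowerset,
      sum_pair hne, sum_pair hne, insert_empty_eq, ← mergeAdjacent_self, splitTerm_empty,
      splitTerm_self, hsplit_a, hsplit_b]
    simp only [smul_zero, zero_add, add_zero, smul_add]
    abel
  · intro j _ hj
    refine sum_eq_zero fun A hA => ?_
    rw [mem_powerset, mergeAdjacent_of_ne σ i hj, subset_singleton_iff] at hA
    obtain rfl | rfl := hA
    · rw [splitTerm_empty, smul_zero]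
    · rw [← mergeAdjacent_of_ne σ i hj, splitTerm_self, smul_zero]
  · exact fun h => (h (mem_univ i)).elim

end OrderedPartition

section topCohomology

open OrderedPartition

variable {K : Type*} [Field K] {m : ℕ}

lemma signFunctional_eq_zero_of_mem_range {x : OPC K (m + 1) (m + 1)}
    (hx : x ∈ LinearMap.range (dOP K (m + 1) m)) : signFunctional K (m + 1) x = 0 := by
  obtain ⟨y, rfl⟩ := hx
  exact LinearMap.congr_fun signFunctional_comp_dOP y

lemma single_add_single_swap_mem_range_dOP (σ : Equiv.Perm (Fin (m + 1))) (i : Fin m) :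
    Finsupp.single (ofPerm σ) 1 + Finsupp.single (ofPerm (σ * Equiv.swap i.castSucc i.succ)) 1 ∈
      LinearMap.range (dOP K (m + 1) m) :=
  ⟨(-1 : K) ^ (i : ℕ) • Finsupp.single (mergeAdjacent σ i) 1, by
    rw [map_smul, dOP_mergeAdjacent, smul_smul, ← mul_pow, neg_one_mul, neg_neg, one_pow,
      one_smul]⟩

lemma mkQ_single_ofPerm (σ : Equiv.Perm (Fin (m + 1))) :
    (LinearMap.range (dOP K (m + 1) m)).mkQ (Finsupp.single (ofPerm σ) 1) =
      ((Equiv.Perm.sign σ : ℤ) : K) •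
        (LinearMap.range (dOP K (m + 1) m)).mkQ (Finsupp.single (ofPerm 1) 1) := by
  have hσ : σ ∈ Submonoid.closure (Set.range fun i : Fin m => Equiv.swap i.castSucc i.succ) := by
    rw [Equiv.Perm.mclosure_swap_castSucc_succ]
    trivial
  induction hσ using Submonoid.closure_induction_right with
  | one => simp
  | mul_right τ _ _ hswap ih =>
    obtain ⟨i, rfl⟩ := hswap
    have hrel :=
      (Submodule.Quotient.mk_eq_zero _).2 (single_add_single_swap_mem_range_dOP (K := K) τ i)
    rw [Submodule.Quotient.mk_add, add_eq_zero_iff_eq_neg'] at hrel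
    rw [Submodule.mkQ_apply, hrel, ← Submodule.mkQ_apply, ih, map_mul,
      Equiv.Perm.sign_swap Fin.castSucc_lt_succ.ne]
    push_cast
    rw [mul_neg_one, neg_smul]

lemma mkQ_eq_signFunctional_smul (x : OPC K (m + 1) (m + 1)) :
    (LinearMap.range (dOP K (m + 1) m)).mkQ x =
      signFunctional K (m + 1) x •
        (LinearMap.range (dOP K (m + 1) m)).mkQ (Finsupp.single (ofPerm 1) 1) := by
  induction x using Finsupp.induction_linear with
  | zero => simp
  | add x y hx hy => rw [map_add, map_add, hx, hy, add_smul]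
  | single P c =>
    obtain ⟨σ, rfl⟩ := ofPerm_surjective P
    rw [← Finsupp.smul_single_one, map_smul, mkQ_single_ofPerm, map_smul, signFunctional_single,
      sign_ofPerm, one_mul, smul_smul, smul_eq_mul]

end topCohomology

theorem statement1_general (K : Type*) [Field K] (m : ℕ) :
    Module.finrank K
      (OPC K (m + 1) (m + 1) ⧸ LinearMap.range (dOP K (m + 1) m)) = 1 := by
  set v := (LinearMap.range (dOP K (m + 1) m)).mkQ (Finsupp.single (OrderedPartition.ofPerm 1) 1)
  have hv : v ≠ 0 := fun h => by
    have := signFunctional_eq_zero_of_mem_range ((Submodule.Quotient.mk_eq_zero _).1 h)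
    simp [signFunctional_single] at this
  refine finrank_eq_one v hv fun w => ?_
  obtain ⟨x, rfl⟩ := Submodule.mkQ_surjective _ w
  exact ⟨signFunctional K (m + 1) x, (mkQ_eq_signFunctional_smul x).symm⟩

/-- the top cohomology `H^n(C) = C^n / im(d : C^{n−1} → C^n)` of the
ordered-partition complex is a one-dimensional `K`-vector space.  (Here `n ≥ 1` is written
as `m + 1` to avoid natural subtraction in the types; note `C^{n+1} = 0`, so every element
of `C^n` is closed.) -/
theorem statement1 (K : Type*) [Field K] [CharZero K] (m : ℕ) :
    Module.finrank K
      (OPC K (m + 1) (m + 1) ⧸ LinearMap.range (dOP K (m + 1) m)) = 1 :=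
  statement1_general K m
end

section
/- Let 𝔞 be a bigraded Lie superalgebra over a field K of characteristic zero, with cohomological degree grading and a compatible positive weight grading. Fix an integer k ≥ 2 and let α be a Maurer–Cartan element whose weight components satisfy α^{(i)} = 0 for all 2 ≤ i ≤ k−1. Suppose b is an element of degree 0 such that α = e^{ad_b} α^{(1)} holds weight-componentwise. Then the weight components of b satisfy [b^{(j)}, α^{(1)}] = 0 for all 1 ≤ j ≤ k−2, and [b^{(k−1)}, α^{(1)}] = α^{(k)}. -/
/-!
Since `b⁽⁰⁾ = 0`, every bracket with `b` raises the weight, so `ad_b^r α⁽¹⁾` lives in weights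
`≥ r + 1`. By induction on the weight `m`, for `2 ≤ m ≤ k − 1` all components `ad_b^r α⁽¹⁾` with
`r ≥ 1` vanish in weight `m`: the terms with `r ≥ 2` are brackets of `b` with lower-weight such
components, so the gauge equation in weight `m` collapses to `α⁽ᵐ⁾ = [b⁽ᵐ⁻¹⁾, α⁽¹⁾]`, and the
left side is zero. In weight `k` the same collapse gives `α⁽ᵏ⁾ = [b⁽ᵏ⁻¹⁾, α⁽¹⁾]`.
-/

open Finset

/-- `c r m` is the weight-`m` component of `ad_b ^ r a`, for `a` of weight `1` and `b j` the
weight-`j` component of `b`. -/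
structure IsAdPowComponents {R A : Type*} [CommSemiring R] [AddCommMonoid A] [Module R A]
    (br : A →ₗ[R] A →ₗ[R] A) (b : ℕ → A) (a : A) (c : ℕ → ℕ → A) : Prop where
  zero : ∀ m, c 0 m = if m = 1 then a else 0
  succ : ∀ r m, c (r + 1) m = ∑ j ∈ range (m + 1), br (b j) (c r (m - j))

namespace IsAdPowComponents

variable {R A : Type*} [CommSemiring R] [AddCommMonoid A] [Module R A]
  {br : A →ₗ[R] A →ₗ[R] A} {b : ℕ → A} {a : A} {c : ℕ → ℕ → A}

theorem apply_eq_zero_of_le (hc : IsAdPowComponents br b a c) (hb0 : b 0 = 0) :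
    ∀ {r m : ℕ}, m ≤ r → c r m = 0
  | 0, m, hm => by simp [hc.zero, show m ≠ 1 by omega]
  | r + 1, m, hm => by
    rw [hc.succ]
    refine sum_eq_zero fun j _ => ?_
    rcases j with _ | j
    · simp [hb0]
    · rw [hc.apply_eq_zero_of_le hb0 (by omega : m - (j + 1) ≤ r), map_zero]

theorem one_succ_apply (hc : IsAdPowComponents br b a c) (j : ℕ) :
    c 1 (j + 1) = br (b j) a := by
  rw [hc.succ, sum_eq_single j]
  · simp [hc.zero]
  · intro i _ hij
    rw [hc.zero, if_neg (by omega), map_zero]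
  · simp

theorem add_two_apply_eq_zero (hc : IsAdPowComponents br b a c) (hb0 : b 0 = 0) {m : ℕ}
    (hlow : ∀ n, 2 ≤ n → n < m → ∀ r, c (r + 1) n = 0) (r : ℕ) : c (r + 2) m = 0 := by
  rw [hc.succ]
  refine sum_eq_zero fun j hj => ?_
  rcases j with _ | j
  · simp [hb0]
  · have hcomp : c (r + 1) (m - (j + 1)) = 0 := by
      by_cases hle : m - (j + 1) ≤ r + 1
      · exact hc.apply_eq_zero_of_le hb0 hle
      · exact hlow _ (by omega) (by simp only [mem_range] at hj; omega) r
    rw [hcomp, map_zero]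

theorem sum_factorial_inv_smul_eq {K : Type*} [DivisionSemiring K] [Module K A]
    (hc : IsAdPowComponents br b a c) {m : ℕ} (hm : 2 ≤ m) (hhigh : ∀ r, c (r + 2) m = 0) :
    ∑ r ∈ range m, ((r.factorial : K)⁻¹) • c r m = c 1 m := by
  rw [sum_eq_single_of_mem 1 (by simp only [mem_range]; omega)]
  · simp
  · rintro (_ | _ | r) _ hr
    · simp [hc.zero, show m ≠ 1 by omega]
    · exact absurd rfl hr
    · rw [hhigh, smul_zero]

theorem apply_eq_zero_of_gauge_eq_zero {K : Type*} [DivisionSemiring K] [Module K A]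
    (hc : IsAdPowComponents br b a c) (hb0 : b 0 = 0) {k : ℕ}
    (hgauge : ∀ m, 2 ≤ m → m < k → ∑ r ∈ range m, ((r.factorial : K)⁻¹) • c r m = 0) :
    ∀ m, 2 ≤ m → m < k → ∀ r, c (r + 1) m = 0 := by
  intro m
  induction m using Nat.strong_induction_on with
  | _ m ih =>
    intro hm hmk
    have hhigh : ∀ r, c (r + 2) m = 0 :=
      hc.add_two_apply_eq_zero hb0 fun n hn hnm => ih n hnm hn (by omega)
    rintro (_ | r)
    · rw [← hc.sum_factorial_inv_smul_eq (K := K) hm hhigh, hgauge m hm hmk]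
    · exact hhigh r

end IsAdPowComponents

theorem statement6_general (K : Type*) [Field K]
    (A : Type*) [AddCommGroup A] [Module K A]
    (deg : ℤ → ℕ → Submodule K A)
    (hw0 : ∀ d : ℤ, deg d 0 = ⊥)
    (br : A →ₗ[K] A →ₗ[K] A)
    -- `α` is a Maurer–Cartan element of degree 1, given by its weight components:
    (α : ℕ → A)
    -- the weight components of `α` vanish in weights `2,…,k−1`:
    (k : ℕ) (hk : 2 ≤ k)
    (hmid : ∀ i, 2 ≤ i → i ≤ k - 1 → α i = 0)
    -- `b` is an element of degree 0, given by its weight components: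
    (b : ℕ → A)
    (hb : ∀ j, b j ∈ deg 0 j)
    -- `c r m` is the weight-`m` component of `ad_b ^ r (α⁽¹⁾)`:
    (c : ℕ → ℕ → A)
    (hc0 : ∀ m, c 0 m = if m = 1 then α 1 else 0)
    (hcrec : ∀ r m, c (r + 1) m = ∑ j ∈ Finset.range (m + 1), br (b j) (c r (m - j)))
    -- the gauge equation `α = e^{ad_b} α⁽¹⁾`, weight-componentwise:
    (hgauge : ∀ m, 1 ≤ m → α m = ∑ r ∈ Finset.range m, ((r.factorial : K)⁻¹) • c r m) :
    (∀ j, 1 ≤ j → j ≤ k - 2 → br (b j) (α 1) = 0) ∧ br (b (k - 1)) (α 1) = α k := by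
  have hb0 : b 0 = 0 := by simpa [hw0] using hb 0
  have hc : IsAdPowComponents br b (α 1) c := ⟨hc0, hcrec⟩
  have hlow : ∀ m, 2 ≤ m → m < k → ∀ r, c (r + 1) m = 0 :=
    hc.apply_eq_zero_of_gauge_eq_zero (K := K) hb0 fun m hm hmk => by
      rw [← hgauge m (by omega), hmid m hm (by omega)]
  obtain ⟨n, rfl⟩ : ∃ n, k = n + 1 := ⟨k - 1, by omega⟩
  refine ⟨fun j hj hjk => ?_, ?_⟩
  · rw [← hc.one_succ_apply]
    exact hlow (j + 1) (by omega) (by omega) 0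
  · rw [hgauge (n + 1) (by omega), hc.sum_factorial_inv_smul_eq (by omega)
      (hc.add_two_apply_eq_zero hb0 hlow), hc.one_succ_apply, Nat.add_sub_cancel]

theorem statement6 (K : Type*) [Field K] [CharZero K]
    (A : Type*) [AddCommGroup A] [Module K A]
    (deg : ℤ → ℕ → Submodule K A)
    (hw0 : ∀ d : ℤ, deg d 0 = ⊥)
    (hdec : DirectSum.IsInternal fun p : ℤ × ℕ => deg p.1 p.2)
    (br : A →ₗ[K] A →ₗ[K] A)
    (hgr : ∀ (d e : ℤ) (i j : ℕ), ∀ x ∈ deg d i, ∀ y ∈ deg e j,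
        br x y ∈ deg (d + e) (i + j))
    (hanti : ∀ (d e : ℤ) (i j : ℕ), ∀ x ∈ deg d i, ∀ y ∈ deg e j,
        br x y = -((-1 : K) ^ (d * e)) • br y x)
    (hjac : ∀ (d e : ℤ) (i j : ℕ), ∀ x ∈ deg d i, ∀ y ∈ deg e j, ∀ z : A,
        br x (br y z) = br (br x y) z + ((-1 : K) ^ (d * e)) • br y (br x z))
    -- `α` is a Maurer–Cartan element of degree 1, given by its weight components:
    (α : ℕ → A)
    (hα : ∀ i, α i ∈ deg 1 i)
    (hαfin : (Function.support α).Finite)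
    (hMC : br (∑ᶠ i, α i) (∑ᶠ i, α i) = 0)
    -- the weight components of `α` vanish in weights `2,…,k−1`:
    (k : ℕ) (hk : 2 ≤ k)
    (hmid : ∀ i, 2 ≤ i → i ≤ k - 1 → α i = 0)
    -- `b` is an element of degree 0, given by its weight components:
    (b : ℕ → A)
    (hb : ∀ j, b j ∈ deg 0 j)
    (hbfin : (Function.support b).Finite)
    -- `c r m` is the weight-`m` component of `ad_b ^ r (α⁽¹⁾)`:
    (c : ℕ → ℕ → A)
    (hc0 : ∀ m, c 0 m = if m = 1 then α 1 else 0)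
    (hcrec : ∀ r m, c (r + 1) m = ∑ j ∈ Finset.range (m + 1), br (b j) (c r (m - j)))
    -- the gauge equation `α = e^{ad_b} α⁽¹⁾`, weight-componentwise:
    (hgauge : ∀ m, 1 ≤ m → α m = ∑ r ∈ Finset.range m, ((r.factorial : K)⁻¹) • c r m) :
    (∀ j, 1 ≤ j → j ≤ k - 2 → br (b j) (α 1) = 0) ∧ br (b (k - 1)) (α 1) = α k :=
  statement6_general K A deg hw0 br α k hk hmid b hb c hc0 hcrec hgauge
end

section
/- Let 𝔞 be a bigraded Lie superalgebra over a field K of characteristic zero, with cohomological degree grading and a compatible positive weight grading. Fix an integer k ≥ 2 and let α be a Maurer–Cartan element whose weight components satisfy α^{(i)} = 0 for all 2 ≤ i ≤ k−1 (so α = α^{(1)} + α^{(k)} + α^{(k+1)} + ⋯). If α^{(k)} does not lie in the image of [α^{(1)}, −] : 𝔞_0 → 𝔞_1 (equivalently, the cohomology class of α^{(k)} in H^1(𝔞, [α^{(1)}, −]) is nonzero), then there exists no element b of degree 0 with α = e^{ad_b} α^{(1)} (weight-componentwise); that is, the Maurer–Cartan elements α and α^{(1)} are not gauge equivalent. -/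
/-!
Write `b = b⁽¹⁾ + b⁽²⁾ + ⋯`. In weight `m ≥ 2` the gauge equation says that `α⁽ᵐ⁾` is
`[b⁽ᵐ⁻¹⁾, α⁽¹⁾]` plus the weight-`m` parts of `ad_b ^ r α⁽¹⁾` for `r ≥ 2`, and those are built
from the brackets `[b⁽ʲ⁾, α⁽¹⁾]` of weight `< m`. Since `α⁽ᵐ⁾ = 0` for `2 ≤ m < k`, induction on
`m` kills all these brackets below weight `k`, so in weight `k` only
`α⁽ᵏ⁾ = [b⁽ᵏ⁻¹⁾, α⁽¹⁾] = [α⁽¹⁾, -b⁽ᵏ⁻¹⁾]` survives, contradicting the hypothesis on `α⁽ᵏ⁾`.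
-/

section

open Finset

variable {R A : Type*} [CommSemiring R] [AddCommMonoid A] [Module R A]

/-- `c r m` is the weight-`m` component of `ad_b ^ r a`, for `a` of weight one and `b` given by
its weight components. -/
structure IsAdPowComponents_s7 (br : A →ₗ[R] A →ₗ[R] A) (b : ℕ → A) (a : A) (c : ℕ → ℕ → A) :
    Prop where
  zero : ∀ m, c 0 m = if m = 1 then a else 0
  succ : ∀ r m, c (r + 1) m = ∑ j ∈ range (m + 1), br (b j) (c r (m - j))

namespace IsAdPowComponents_s7

variable {br : A →ₗ[R] A →ₗ[R] A} {b : ℕ → A} {a : A} {c : ℕ → ℕ → A}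

theorem eq_zero_of_le (hc : IsAdPowComponents_s7 br b a c) (hb0 : b 0 = 0) :
    ∀ {r m : ℕ}, m ≤ r → c r m = 0
  | 0, m, hm => by simp [hc.zero, show m ≠ 1 by omega]
  | r + 1, m, hm => by
    rw [hc.succ]
    refine sum_eq_zero fun j _ => ?_
    rcases Nat.eq_zero_or_pos j with rfl | hj
    · simp [hb0]
    · rw [hc.eq_zero_of_le hb0 (by omega : m - j ≤ r), map_zero]

theorem one_eq (hc : IsAdPowComponents_s7 br b a c) {m : ℕ} (hm : 1 ≤ m) :
    c 1 m = br (b (m - 1)) a := by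
  rw [hc.succ, sum_eq_single_of_mem (m - 1) (mem_range.2 (by omega))]
  · simp [hc.zero, show m - (m - 1) = 1 by omega]
  · intro j _ hj
    simp [hc.zero, show m - j ≠ 1 by omega]

theorem add_two_eq_zero (hc : IsAdPowComponents_s7 br b a c) (hb0 : b 0 = 0) {m : ℕ}
    (hlow : ∀ t < m, c 1 t = 0) (r : ℕ) : c (r + 2) m = 0 := by
  induction r generalizing m with
  | zero => ?_
  | succ r ih => ?_
  all_goals
    rw [hc.succ]
    refine sum_eq_zero fun j hj => ?_
    rw [mem_range] at hj
    rcases Nat.eq_zero_or_pos j with rfl | hj0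
    · simp [hb0]
  · rw [hlow (m - j) (by omega), map_zero]
  · rw [ih fun t ht => hlow t (by omega), map_zero]

theorem sum_smul_eq_of_lt (hc : IsAdPowComponents_s7 br b a c) (hb0 : b 0 = 0) {m : ℕ}
    (hm : 2 ≤ m) (hlow : ∀ t < m, c 1 t = 0) (w : ℕ → R) :
    ∑ r ∈ range m, w r • c r m = w 1 • c 1 m := by
  refine sum_eq_single_of_mem 1 (mem_range.2 (by omega)) fun r _ hr => ?_
  match r, hr with
  | 0, _ => simp [hc.zero, show m ≠ 1 by omega]
  | r + 2, _ => rw [hc.add_two_eq_zero hb0 hlow, smul_zero]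

end IsAdPowComponents_s7

end

theorem statement7_general (K : Type*) [Field K]
    (A : Type*) [AddCommGroup A] [Module K A]
    (deg : ℤ → ℕ → Submodule K A)
    (hw0 : ∀ d : ℤ, deg d 0 = ⊥)
    (br : A →ₗ[K] A →ₗ[K] A)
    (hanti : ∀ (d e : ℤ) (i j : ℕ), ∀ x ∈ deg d i, ∀ y ∈ deg e j,
        br x y = -((-1 : K) ^ (d * e)) • br y x)
    -- `α` is a Maurer–Cartan element of degree 1, given by its weight components:
    (α : ℕ → A)
    (hα : ∀ i, α i ∈ deg 1 i)
    -- the weight components of `α` vanish in weights `2,…,k−1`: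
    (k : ℕ) (hk : 2 ≤ k)
    (hmid : ∀ i, 2 ≤ i → i ≤ k - 1 → α i = 0)
    -- `α⁽ᵏ⁾` is not in the image of `[α⁽¹⁾, −] : 𝔞₀ → 𝔞₁`:
    (hcls : ∀ y ∈ ⨆ i : ℕ, deg 0 i, br (α 1) y ≠ α k) :
    -- then `α` and `α⁽¹⁾` are not gauge equivalent:
    ¬ ∃ (b : ℕ → A) (c : ℕ → ℕ → A),
        (∀ j, b j ∈ deg 0 j) ∧
        (Function.support b).Finite ∧
        (∀ m, c 0 m = if m = 1 then α 1 else 0) ∧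
        (∀ r m, c (r + 1) m = ∑ j ∈ Finset.range (m + 1), br (b j) (c r (m - j))) ∧
        (∀ m, 1 ≤ m → α m = ∑ r ∈ Finset.range m, ((r.factorial : K)⁻¹) • c r m) := by
  rintro ⟨b, c, hb, -, hc0, hcsucc, hgauge⟩
  have hc : IsAdPowComponents_s7 br b (α 1) c := ⟨hc0, hcsucc⟩
  have hb0 : b 0 = 0 := by simpa [hw0] using hb 0
  have hgauge' : ∀ m, 2 ≤ m → (∀ t < m, c 1 t = 0) → α m = c 1 m := fun m hm hlow => by
    simpa [hc.sum_smul_eq_of_lt hb0 hm hlow] using hgauge m (by omega)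
  have hlow : ∀ t < k, c 1 t = 0 := by
    intro t
    induction t using Nat.strong_induction_on with
    | _ t ih =>
      intro ht
      rcases Nat.lt_or_ge t 2 with ht2 | ht2
      · exact hc.eq_zero_of_le hb0 (by omega)
      · rw [← hgauge' t ht2 fun s hs => ih s hs (by omega), hmid t ht2 (by omega)]
  have hαk : α k = br (α 1) (-b (k - 1)) := by
    rw [hgauge' k hk hlow, hc.one_eq (by omega), map_neg,
      hanti 0 1 (k - 1) 1 _ (hb (k - 1)) _ (hα 1)]
    simp
  exact hcls _ (neg_mem (Submodule.mem_iSup_of_mem (k - 1) (hb (k - 1)))) hαk.symm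

theorem statement7 (K : Type*) [Field K] [CharZero K]
    (A : Type*) [AddCommGroup A] [Module K A]
    (deg : ℤ → ℕ → Submodule K A)
    (hw0 : ∀ d : ℤ, deg d 0 = ⊥)
    (hdec : DirectSum.IsInternal fun p : ℤ × ℕ => deg p.1 p.2)
    (br : A →ₗ[K] A →ₗ[K] A)
    (hgr : ∀ (d e : ℤ) (i j : ℕ), ∀ x ∈ deg d i, ∀ y ∈ deg e j,
        br x y ∈ deg (d + e) (i + j))
    (hanti : ∀ (d e : ℤ) (i j : ℕ), ∀ x ∈ deg d i, ∀ y ∈ deg e j,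
        br x y = -((-1 : K) ^ (d * e)) • br y x)
    (hjac : ∀ (d e : ℤ) (i j : ℕ), ∀ x ∈ deg d i, ∀ y ∈ deg e j, ∀ z : A,
        br x (br y z) = br (br x y) z + ((-1 : K) ^ (d * e)) • br y (br x z))
    -- `α` is a Maurer–Cartan element of degree 1, given by its weight components:
    (α : ℕ → A)
    (hα : ∀ i, α i ∈ deg 1 i)
    (hαfin : (Function.support α).Finite)
    (hMC : br (∑ᶠ i, α i) (∑ᶠ i, α i) = 0)
    -- the weight components of `α` vanish in weights `2,…,k−1`:
    (k : ℕ) (hk : 2 ≤ k)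
    (hmid : ∀ i, 2 ≤ i → i ≤ k - 1 → α i = 0)
    -- `α⁽ᵏ⁾` is not in the image of `[α⁽¹⁾, −] : 𝔞₀ → 𝔞₁`:
    (hcls : ∀ y ∈ ⨆ i : ℕ, deg 0 i, br (α 1) y ≠ α k) :
    -- then `α` and `α⁽¹⁾` are not gauge equivalent:
    ¬ ∃ (b : ℕ → A) (c : ℕ → ℕ → A),
        (∀ j, b j ∈ deg 0 j) ∧
        (Function.support b).Finite ∧
        (∀ m, c 0 m = if m = 1 then α 1 else 0) ∧
        (∀ r m, c (r + 1) m = ∑ j ∈ Finset.range (m + 1), br (b j) (c r (m - j))) ∧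
        (∀ m, 1 ≤ m → α m = ∑ r ∈ Finset.range m, ((r.factorial : K)⁻¹) • c r m) :=
  statement7_general K A deg hw0 br hanti α hα k hk hmid hcls
end
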